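/- Let κ be a regular uncountable cardinal and ⟨C_α : α < κ, α limit⟩ a coherent sequence: each C_α is a club in α, and whenever α is an accumulation point of C_β (α < β) then C_β ∩ α = C_α. Suppose T' is a club subset of κ such that for all limit points α < β of T', C_α is an initial segment of C_β (i.e., C_α = C_β ∩ α). Then E = ⋃{C_α : α a limit point of T'} is a club in κ that threads the sequence: for every accumulation point α of E, E ∩ α = C_α. Consequently, if ⟨C_α⟩ is a □(κ)-sequence (additionally has no thread), no such club T' can exist. -/

import Mathlib

open Ordinal Set

/-- `C` is closed below `κ`: it contains every limit ordinal `α < κ`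
in which `C` is unbounded. -/
def IsClosedIn (C : Set Ordinal) (κ : Ordinal) : Prop :=
  ∀ α, α < κ → Order.IsSuccLimit α → (∀ β, β < α → ∃ γ ∈ C, β < γ ∧ γ < α) → α ∈ C

/-- `C` is unbounded in `κ`. -/
def IsUnboundedIn (C : Set Ordinal) (κ : Ordinal) : Prop :=
  ∀ α, α < κ → ∃ β ∈ C, α ≤ β ∧ β < κ

/-- `C` is a club (closed unbounded) subset of `κ`. -/
def IsClubIn (C : Set Ordinal) (κ : Ordinal) : Prop :=
  IsClosedIn C κ ∧ IsUnboundedIn C κ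

/-- `S` is stationary in `κ`: it meets every club of `κ`. -/
def IsStationaryIn (S : Set Ordinal) (κ : Ordinal) : Prop :=
  ∀ C, IsClubIn C κ → (S ∩ C).Nonempty

/-- The ordinal `κ` is a regular cardinal. -/
def IsRegularOrd (κ : Ordinal) : Prop := κ.cof.ord = κ

/-- `c` is continuous on `μ`: it preserves suprema at limit ordinals below `μ`. -/
def ContOn (c : Ordinal → Ordinal) (μ : Ordinal) : Prop :=
  ∀ lam, lam < μ → Order.IsSuccLimit lam → c lam = sSup (c '' Iio lam)

/-- `c` maps `μ` cofinally into `κ`. -/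
def CofinalMap (c : Ordinal → Ordinal) (μ κ : Ordinal) : Prop :=
  (∀ β, β < μ → c β < κ) ∧ ∀ α, α < κ → ∃ β, β < μ ∧ α ≤ c β

/-- `c` is strictly increasing on `μ`. -/
def StrictIncOn (c : Ordinal → Ordinal) (μ : Ordinal) : Prop :=
  ∀ β γ, β < γ → γ < μ → c β < c γ

/-- `α` is an accumulation point of `A` (a limit ordinal in which `A ∩ α` is unbounded). -/
def IsAccBelow (A : Set Ordinal) (α : Ordinal) : Prop :=
  Order.IsSuccLimit α ∧ ∀ γ, γ < α → ∃ δ ∈ A, γ < δ ∧ δ < α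

/-!
Any two pieces `C α`, `C β` with `α < β` limit points of `T'` are initial segments of one another,
so the union `E` agrees with `C β` below every such `β`, and these `β` are cofinal in `κ` because
`cof κ > ℵ₀`. Closedness, unboundedness and threading of `E` at a point below `β` are therefore
statements about `C β`, which is club in `β` and coheres with the sequence.
-/

open Cardinal Order

lemma IsRegularOrd.aleph0_lt_cof {κ : Ordinal} (hκ : IsRegularOrd κ) (hωκ : ω < κ) :
    ℵ₀ < κ.cof := by
  rwa [← Cardinal.ord_lt_ord, Cardinal.ord_aleph0, hκ]

lemma isAccBelow_of_forall_lt {A : Set Ordinal} {α : Ordinal} (hα : α ≠ 0)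
    (h : ∀ γ < α, ∃ δ ∈ A, γ < δ ∧ δ < α) : IsAccBelow A α := by
  refine ⟨Ordinal.isSuccLimit_iff.2 ⟨hα, isSuccPrelimit_of_succ_lt fun γ hγ => ?_⟩, h⟩
  obtain ⟨δ, -, hγδ, hδα⟩ := h γ hγ
  exact (succ_le_of_lt hγδ).trans_lt hδα

lemma IsAccBelow.of_inter_Iio_subset {A B : Set Ordinal} {α β : Ordinal} (hA : IsAccBelow A α)
    (hAB : A ∩ Iio β ⊆ B) (hαβ : α ≤ β) : IsAccBelow B α := by
  refine ⟨hA.1, fun γ hγ => ?_⟩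
  obtain ⟨δ, hδA, hγδ, hδα⟩ := hA.2 γ hγ
  exact ⟨δ, hAB ⟨hδA, hδα.trans_le hαβ⟩, hγδ, hδα⟩

/-- Iterate "jump to a point of `T` above" `ω` times (`nfp`); the supremum stays below `κ`
because `cof κ > ℵ₀`. -/
lemma IsUnboundedIn.exists_isAccBelow {T : Set Ordinal} {κ δ : Ordinal} (hT : IsUnboundedIn T κ)
    (hκ : ℵ₀ < κ.cof) (hδ : δ < κ) : ∃ α, δ < α ∧ α < κ ∧ IsAccBelow T α := by
  have hnext : ∀ x, ∃ y, x < κ → y ∈ T ∧ x ≤ y ∧ y < κ := fun x => by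
    by_cases hx : x < κ
    · obtain ⟨y, hy⟩ := hT x hx
      exact ⟨y, fun _ => hy⟩
    · exact ⟨0, fun h => (hx h).elim⟩
  choose g hg using hnext
  set f := fun x => succ (g x)
  have hf : ∀ x < κ, f x < κ := fun x hx =>
    (Ordinal.one_lt_cof_iff.1 (one_lt_aleph0.trans hκ)).succ_lt (hg x hx).2.2
  have hiter : ∀ n, f^[n] δ < κ := fun n => by
    induction n with
    | zero => exact hδ
    | succ n ih => rw [Function.iterate_succ_apply']; exact hf _ ih
  have hstep : ∀ n, f^[n] δ ≤ g (f^[n] δ) ∧ g (f^[n] δ) < nfp f δ := fun n => by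
    refine ⟨(hg _ (hiter n)).2.1, (lt_succ _).trans_le ?_⟩
    simpa only [Function.iterate_succ_apply'] using iterate_le_nfp f δ (n + 1)
  have hδα : δ < nfp f δ := (hstep 0).1.trans_lt (hstep 0).2
  refine ⟨nfp f δ, hδα, nfp_lt_ord hκ hf hδ, isAccBelow_of_forall_lt hδα.ne_bot fun γ hγ => ?_⟩
  obtain ⟨n, hn⟩ := lt_nfp_iff.1 hγ
  exact ⟨g (f^[n] δ), (hg _ (hiter n)).1, hn.trans_le (hstep n).1, (hstep n).2⟩

section BiUnion

variable {κ : Ordinal} {C : Ordinal → Set Ordinal} {L : Set Ordinal}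

lemma biUnion_inter_Iio_eq (hinit : ∀ α ∈ L, ∀ β ∈ L, α < β → C α = C β ∩ Iio α) {β : Ordinal}
    (hβ : β ∈ L) (hCβ : C β ⊆ Iio β) : (⋃ α ∈ L, C α) ∩ Iio β = C β := by
  ext x
  refine ⟨fun ⟨hx, hxβ⟩ => ?_, fun hx => ⟨mem_biUnion hβ hx, hCβ hx⟩⟩
  obtain ⟨α, hα, hxα⟩ := mem_iUnion₂.1 hx
  rcases lt_trichotomy α β with hαβ | rfl | hβα
  · exact (hinit α hα β hβ hαβ ▸ hxα).1
  · exact hxα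
  · exact hinit β hβ α hα hβα ▸ ⟨hxα, hxβ⟩

/-- `IsClubIn (C β) β` does not give `C β ⊆ Iio β`; that comes from `C β` being an initial
segment of a later piece. -/
lemma exists_biUnion_inter_Iio_eq (hLκ : ∀ α ∈ L, α < κ) (hLunb : ∀ δ < κ, ∃ α ∈ L, δ < α)
    (hinit : ∀ α ∈ L, ∀ β ∈ L, α < β → C α = C β ∩ Iio α) {δ : Ordinal} (hδ : δ < κ) :
    ∃ β ∈ L, δ < β ∧ (⋃ α ∈ L, C α) ∩ Iio β = C β := by
  obtain ⟨β, hβ, hδβ⟩ := hLunb δ hδ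
  obtain ⟨β', hβ', hββ'⟩ := hLunb β (hLκ β hβ)
  have hCβ : C β ⊆ Iio β := hinit β hβ β' hβ' hββ' ▸ inter_subset_right
  exact ⟨β, hβ, hδβ, biUnion_inter_Iio_eq hinit hβ hCβ⟩

lemma isClubIn_biUnion (hLκ : ∀ α ∈ L, α < κ) (hLunb : ∀ δ < κ, ∃ α ∈ L, δ < α)
    (hinit : ∀ α ∈ L, ∀ β ∈ L, α < β → C α = C β ∩ Iio α)
    (hclub : ∀ α ∈ L, IsClubIn (C α) α) : IsClubIn (⋃ α ∈ L, C α) κ := by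
  constructor
  · intro α hακ hαlim hαacc
    obtain ⟨β, hβ, hαβ, hEβ⟩ := exists_biUnion_inter_Iio_eq hLκ hLunb hinit hακ
    have hαacc' : IsAccBelow (C β) α := IsAccBelow.of_inter_Iio_subset
      ⟨hαlim, hαacc⟩ hEβ.subset hαβ.le
    exact mem_biUnion hβ ((hclub β hβ).1 α hαβ hαlim hαacc'.2)
  · intro δ hδ
    obtain ⟨α, hα, hδα⟩ := hLunb δ hδ
    obtain ⟨β, hβC, hδβ, hβα⟩ := (hclub α hα).2 δ hδα
    exact ⟨β, mem_biUnion hα hβC, hδβ, hβα.trans (hLκ α hα)⟩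

lemma biUnion_inter_Iio_eq_of_isAccBelow (hLκ : ∀ α ∈ L, α < κ)
    (hLunb : ∀ δ < κ, ∃ α ∈ L, δ < α) (hinit : ∀ α ∈ L, ∀ β ∈ L, α < β → C α = C β ∩ Iio α)
    (hcoh : ∀ α, ∀ β ∈ L, α < β → IsAccBelow (C β) α → C β ∩ Iio α = C α) {α : Ordinal}
    (hακ : α < κ) (hα : IsAccBelow (⋃ α ∈ L, C α) α) : (⋃ α ∈ L, C α) ∩ Iio α = C α := by
  obtain ⟨β, hβ, hαβ, hEβ⟩ := exists_biUnion_inter_Iio_eq hLκ hLunb hinit hακ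
  calc (⋃ α ∈ L, C α) ∩ Iio α = (⋃ α ∈ L, C α) ∩ Iio β ∩ Iio α := by
        rw [inter_assoc, Iio_inter_Iio, min_eq_right hαβ.le]
    _ = C β ∩ Iio α := by rw [hEβ]
    _ = C α := hcoh α β hβ hαβ (hα.of_inter_Iio_subset hEβ.subset hαβ.le)

end BiUnion

/-- from a coherent sequence and a club `T'` whose limit points give
mutually coherent pieces, the union `E` of those pieces is a club threading the
sequence. -/
theorem stmt8 (κ : Ordinal) (C : Ordinal → Set Ordinal) (T' : Set Ordinal)
    (hκ : IsRegularOrd κ) (hωκ : Ordinal.omega0 < κ)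
    (hclub : ∀ α, α < κ → Order.IsSuccLimit α → IsClubIn (C α) α)
    (hcoh : ∀ α β, Order.IsSuccLimit α → Order.IsSuccLimit β → α < β → β < κ → IsAccBelow (C β) α →
      C β ∩ Iio α = C α)
    (hT' : IsClubIn T' κ)
    (hinit : ∀ α β, α < β → β < κ → IsAccBelow T' α → IsAccBelow T' β →
      C α = C β ∩ Iio α) :
    IsClubIn (⋃ α ∈ {α | α < κ ∧ IsAccBelow T' α}, C α) κ ∧
      ∀ α, α < κ → IsAccBelow (⋃ α ∈ {α | α < κ ∧ IsAccBelow T' α}, C α) α →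
        (⋃ α ∈ {α | α < κ ∧ IsAccBelow T' α}, C α) ∩ Iio α = C α := by
  set L := {α | α < κ ∧ IsAccBelow T' α}
  have hLκ : ∀ α ∈ L, α < κ := fun α hα => hα.1
  have hLunb : ∀ δ < κ, ∃ α ∈ L, δ < α := fun δ hδ => by
    obtain ⟨α, hδα, hακ, hα⟩ := hT'.2.exists_isAccBelow (hκ.aleph0_lt_cof hωκ) hδ
    exact ⟨α, ⟨hακ, hα⟩, hδα⟩
  have hinitL : ∀ α ∈ L, ∀ β ∈ L, α < β → C α = C β ∩ Iio α :=
    fun α hα β hβ hαβ => hinit α β hαβ hβ.1 hα.2 hβ.2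
  have hcohL : ∀ α, ∀ β ∈ L, α < β → IsAccBelow (C β) α → C β ∩ Iio α = C α :=
    fun α β hβ hαβ hα => hcoh α β hα.1 hβ.2.1 hαβ hβ.1 hα
  exact ⟨isClubIn_biUnion hLκ hLunb hinitL fun α hα => hclub α hα.1 hα.2.1,
    fun α hακ hα => biUnion_inter_Iio_eq_of_isAccBelow hLκ hLunb hinitL hcohL hακ hα⟩
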